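/- Let $m \geq 2$, let $D$ be a set with at least two elements, and suppose $h_1, \dots, h_m: D \to D$ are nonconstant injective maps such that for every $(\tau^1, \dots, \tau^m) \in D^m$ and every $\sigma \in S_m$ the unordered tuples $\langle h_1(\tau^{\sigma(1)}), \dots, h_m(\tau^{\sigma(m)}) \rangle$ and $\langle h_1(\tau^1), \dots, h_m(\tau^m) \rangle$ agree. Then all the maps $h_1, \dots, h_m$ are equal. -/
import Mathlib

private lemma key_15 {D : Type*} {m : ℕ} (h : Fin m → D → D)
    (hinj : ∀ j, Function.Injective (h j))
    (hsym : ∀ (τ : Fin m → D) (σ : Equiv.Perm (Fin m)),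
      ∃ ρ : Equiv.Perm (Fin m), ∀ i : Fin m, h (ρ i) (τ (σ (ρ i))) = h i (τ i))
    (a b : Fin m) (hab : a ≠ b) (x c : D) (hxc : x ≠ c) :
    h a x = h b x := by
  classical
  set τ : Fin m → D := fun k => if k = a then x else c with hτ
  obtain ⟨ρ, hρ⟩ := hsym τ (Equiv.swap a b)
  set f : Fin m → D := fun k => h k (τ k) with hf
  set g : Fin m → D := fun k => h k (τ (Equiv.swap a b k)) with hg
  have hfg : ∀ i, g (ρ i) = f i := hρ
  set v := h a x with hv
  by_contra hbx
  have hτa : τ a = x := by simp [hτ]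
  have hτb : τ b = c := by simp [hτ, Ne.symm hab]
  have hga : g a = h a c := by simp [hg, Equiv.swap_apply_left, hτb]
  have hgb : g b = h b x := by simp [hg, Equiv.swap_apply_right, hτa]
  have hcard : (Finset.univ.filter (fun k => f k = v)).card
      = (Finset.univ.filter (fun k => g k = v)).card := by
    apply Finset.card_bij' (fun k _ => ρ k) (fun k _ => ρ.symm k)
    · intro k hk
      simp only [Finset.mem_filter, Finset.mem_univ, true_and] at hk ⊢
      rw [hfg k]; exact hk
    · intro k hk
      simp only [Finset.mem_filter, Finset.mem_univ, true_and] at hk ⊢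
      have := hfg (ρ.symm k)
      rw [Equiv.apply_symm_apply] at this
      rw [← this]; exact hk
    · intro k _; simp
    · intro k _; simp
  have hsub : (Finset.univ.filter (fun k => g k = v))
      ⊆ (Finset.univ.filter (fun k => f k = v)).erase a := by
    intro k hk
    simp only [Finset.mem_filter, Finset.mem_univ, true_and] at hk
    rcases eq_or_ne k a with hka' | hka
    · exfalso
      rw [hka', hga] at hk
      exact hxc (hinj a hk.symm)
    · rcases eq_or_ne k b with hkb' | hkb
      · exfalso; rw [hkb', hgb] at hk; exact hbx hk.symm
      · have hswap : Equiv.swap a b k = k := Equiv.swap_apply_of_ne_of_ne hka hkb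
        rw [Finset.mem_erase]
        refine ⟨hka, ?_⟩
        simp only [Finset.mem_filter, Finset.mem_univ, true_and]
        simpa [hf, hg, hswap] using hk
  have hamem : a ∈ Finset.univ.filter (fun k => f k = v) := by
    simp only [Finset.mem_filter, Finset.mem_univ, true_and, hf, hτa, hv]
  have h1 : (Finset.univ.filter (fun k => g k = v)).card
      ≤ (Finset.univ.filter (fun k => f k = v)).card - 1 := by
    calc _ ≤ ((Finset.univ.filter (fun k => f k = v)).erase a).card :=
          Finset.card_le_card hsub
      _ = _ := Finset.card_erase_of_mem hamem
  have h2 : 1 ≤ (Finset.univ.filter (fun k => f k = v)).card :=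
    Finset.card_pos.mpr ⟨a, hamem⟩
  omega

/-- If `h₁, …, hₘ : D → D` are injective nonconstant maps such that for every tuple `τ` and every
permutation `σ`, the unordered tuples `⟨h₁(τ^{σ(1)}),…,hₘ(τ^{σ(m)})⟩` and `⟨h₁(τ¹),…,hₘ(τᵐ)⟩`
agree, then all the `hⱼ` are equal. -/
theorem stmt_15 {D : Type*} (m : ℕ) (hm : 2 ≤ m) (hD : ∃ a b : D, a ≠ b)
    (h : Fin m → D → D)
    (hinj : ∀ j, Function.Injective (h j))
    (hnc : ∀ j, ∃ a b : D, h j a ≠ h j b)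
    (hsym : ∀ (τ : Fin m → D) (σ : Equiv.Perm (Fin m)),
      ∃ ρ : Equiv.Perm (Fin m), ∀ i : Fin m, h (ρ i) (τ (σ (ρ i))) = h i (τ i)) :
    ∀ i j : Fin m, h i = h j := by
  intro i j
  rcases eq_or_ne i j with rfl | hij
  · rfl
  · funext x
    obtain ⟨a, b, hab⟩ := hD
    rcases eq_or_ne x a with rfl | hxa
    · exact key_15 h hinj hsym i j hij x b hab
    · exact key_15 h hinj hsym i j hij x a hxa
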